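/- The terminal cost given by the discrete Lyapunov equation equals the infinite-horizon cost under the terminal feedback: let A_cl be an n×n real matrix, K an m×n real matrix, and Q, R, Q̄ symmetric real matrices of sizes n×n, m×m, n×n respectively, satisfying the discrete Lyapunov equation Q̄ − A_clᵀ·Q̄·A_cl = Q + Kᵀ·R·K. Let z₀ ∈ ℝⁿ and define z(i) = A_cl^i·z₀, v(i) = K·z(i). If z(i) → 0 as i → ∞, then the series ∑_{i=0}^{∞} (z(i)ᵀ·Q·z(i) + v(i)ᵀ·R·v(i)) converges and equals z₀ᵀ·Q̄·z₀. -/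

import Mathlib

open Matrix Filter

private lemma aux_dot {p : ℕ} (x y : Fin p → ℝ) : |x ⬝ᵥ y| ≤ p * ‖x‖ * ‖y‖ := by
  calc |x ⬝ᵥ y| ≤ ∑ j, |x j * y j| := Finset.abs_sum_le_sum_abs _ _
    _ ≤ ∑ _j : Fin p, ‖x‖ * ‖y‖ := by
        refine Finset.sum_le_sum fun j _ => ?_
        rw [abs_mul]
        exact mul_le_mul (norm_le_pi_norm x j) (norm_le_pi_norm y j)
          (abs_nonneg _) (norm_nonneg _)
    _ = p * ‖x‖ * ‖y‖ := by simp [Finset.sum_const, mul_assoc]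

private lemma aux_mulVec {p q : ℕ} (M : Matrix (Fin p) (Fin q) ℝ) :
    ∃ c : ℝ, 0 ≤ c ∧ ∀ x, ‖M *ᵥ x‖ ≤ c * ‖x‖ := by
  refine ⟨‖LinearMap.toContinuousLinearMap (Matrix.mulVecLin M)‖, norm_nonneg _, fun x => ?_⟩
  have := (LinearMap.toContinuousLinearMap (Matrix.mulVecLin M)).le_opNorm x
  simpa using this

private lemma aux_quad {p : ℕ} (M : Matrix (Fin p) (Fin p) ℝ) :
    ∃ c : ℝ, 0 ≤ c ∧ ∀ x : Fin p → ℝ, |x ⬝ᵥ (M *ᵥ x)| ≤ c * (‖x‖ * ‖x‖) := by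
  obtain ⟨c, hc, hle⟩ := aux_mulVec M
  refine ⟨p * c, by positivity, fun x => ?_⟩
  calc |x ⬝ᵥ (M *ᵥ x)| ≤ p * ‖x‖ * ‖M *ᵥ x‖ := aux_dot _ _
    _ ≤ p * ‖x‖ * (c * ‖x‖) := by
        refine mul_le_mul_of_nonneg_left (hle x) (by positivity)
    _ = p * c * (‖x‖ * ‖x‖) := by ring

private lemma aux_decay {n : ℕ} (Acl : Matrix (Fin n) (Fin n) ℝ) (z : ℕ → Fin n → ℝ)
    (hstep : ∀ k, z (k + 1) = Acl *ᵥ z k)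
    (hconv : Tendsto z atTop (nhds 0)) :
    ∃ C ρ : ℝ, 0 ≤ C ∧ 0 ≤ ρ ∧ ρ < 1 ∧ ∀ i, ‖z i‖ ≤ C * ρ ^ i := by
  set Alin : (Fin n → ℝ) →ₗ[ℝ] (Fin n → ℝ) := Matrix.mulVecLin Acl with hAlin
  have hAstep : ∀ k, Alin (z k) = z (k + 1) := by
    intro k; rw [hstep k, hAlin, Matrix.mulVecLin_apply]
  have hAk : ∀ (i k : ℕ), (Alin ^ i) (z k) = z (k + i) := by
    intro i
    induction i with
    | zero => intro k; simp
    | succ i ih =>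
      intro k
      rw [pow_succ, Module.End.mul_apply, hAstep k, ih (k + 1)]
      have : k + 1 + i = k + (i + 1) := by omega
      rw [this]
  set V : Submodule ℝ (Fin n → ℝ) := Submodule.span ℝ (Set.range z) with hV
  have hmem : ∀ i, z i ∈ V := fun i => Submodule.subset_span ⟨i, rfl⟩
  have hmaps : ∀ x ∈ V, Alin x ∈ V := by
    intro x hx
    refine Submodule.span_induction (fun y hy => ?_) (by simp) (fun a b _ _ ha hb => ?_)
      (fun c a _ ha => ?_) hx
    · obtain ⟨i, rfl⟩ := hy
      rw [hAstep i]; exact hmem (i + 1)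
    · rw [map_add]; exact V.add_mem ha hb
    · rw [_root_.map_smul]; exact V.smul_mem c ha
  set f : V →ₗ[ℝ] V := Alin.restrict hmaps with hf
  have hcoe : ∀ (i : ℕ) (x : V), (((f ^ i) x : V) : Fin n → ℝ) = (Alin ^ i) (x : Fin n → ℝ) := by
    intro i
    induction i with
    | zero => intro x; simp
    | succ i ih =>
      intro x
      rw [pow_succ', pow_succ', Module.End.mul_apply, Module.End.mul_apply]
      conv_lhs => rw [hf, LinearMap.restrict_apply]
      simp [← hf, ih]
  -- pointwise convergence in ambient space
  have hamb : ∀ y ∈ V, Tendsto (fun i => (Alin ^ i) y) atTop (nhds 0) := by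
    intro y hy
    refine Submodule.span_induction (fun x hx => ?_) ?_ (fun a b _ _ ha hb => ?_)
      (fun c a _ ha => ?_) hy
    · obtain ⟨k, rfl⟩ := hx
      simp_rw [hAk]
      have : (fun i => z (k + i)) = fun i => z (i + k) := by funext i; rw [add_comm]
      rw [this]
      exact (tendsto_add_atTop_iff_nat k).2 hconv
    · have : (fun i => (Alin ^ i) (0 : Fin n → ℝ)) = fun _ => 0 := by funext i; simp
      rw [this]; exact tendsto_const_nhds
    · have h := ha.add hb
      simp only [add_zero] at h
      exact h.congr (fun i => (map_add (Alin ^ i) a b).symm)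
    · have h := ha.const_smul c
      simp only [smul_zero] at h
      exact h.congr (fun i => (_root_.map_smul (Alin ^ i) c a).symm)
  -- convergence in V, for all x : V
  have hptV : ∀ x : V, Tendsto (fun i => (f ^ i) x) atTop (nhds 0) := by
    intro x
    rw [Topology.IsEmbedding.subtypeVal.tendsto_nhds_iff]
    have : (Subtype.val ∘ fun i => (f ^ i) x) = fun i => (Alin ^ i) (x : Fin n → ℝ) := by
      funext i; exact hcoe i x
    rw [this]
    simpa using hamb x x.2
  -- basis and coordinate bounds
  set b := Module.finBasis ℝ V with hb
  set d := Module.finrank ℝ V with hd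
  have hcoord : ∀ j : Fin d, ∃ c : ℝ, 0 ≤ c ∧ ∀ x : V, |b.repr x j| ≤ c * ‖x‖ := by
    intro j
    refine ⟨‖LinearMap.toContinuousLinearMap (b.coord j)‖, ?_, fun x => ?_⟩
    · exact norm_nonneg (LinearMap.toContinuousLinearMap (b.coord j))
    have h := (LinearMap.toContinuousLinearMap (b.coord j)).le_opNorm x
    simpa [Module.Basis.coord_apply, Real.norm_eq_abs] using h
  choose c hc0 hcle using hcoord
  -- uniform bound on ‖(f^i) x‖
  have hub : ∀ (i : ℕ) (x : V), ‖(f ^ i) x‖ ≤ (∑ j, c j * ‖(f ^ i) (b j)‖) * ‖x‖ := by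
    intro i x
    conv_lhs => rw [← b.sum_repr x]
    rw [map_sum]
    calc ‖∑ j, (f ^ i) (b.repr x j • b j)‖ ≤ ∑ j, ‖(f ^ i) (b.repr x j • b j)‖ :=
          norm_sum_le _ _
      _ = ∑ j, |b.repr x j| * ‖(f ^ i) (b j)‖ := by
          refine Finset.sum_congr rfl fun j _ => ?_
          rw [_root_.map_smul]
          rw [norm_smul (b.repr x j) ((f ^ i) (b j)), Real.norm_eq_abs]
      _ ≤ ∑ j, (c j * ‖x‖) * ‖(f ^ i) (b j)‖ := by
          refine Finset.sum_le_sum fun j _ => ?_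
          exact mul_le_mul_of_nonneg_right (hcle j x) (norm_nonneg _)
      _ = (∑ j, c j * ‖(f ^ i) (b j)‖) * ‖x‖ := by
          rw [Finset.sum_mul]; refine Finset.sum_congr rfl fun j _ => ?_; ring
  -- the sum tends to 0
  have hS : Tendsto (fun i => ∑ j, c j * ‖(f ^ i) (b j)‖) atTop (nhds 0) := by
    have : (0 : ℝ) = ∑ _j : Fin d, (0 : ℝ) := by simp
    rw [this]
    refine tendsto_finset_sum _ fun j _ => ?_
    have h := (hptV (b j)).norm
    simp only [norm_zero] at h
    simpa using h.const_mul (c j)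
  obtain ⟨N₀, hN₀⟩ := eventually_atTop.1 (hS.eventually_lt_const (by norm_num : (0:ℝ) < 1/2))
  set N := N₀ + 1 with hN
  have hNpos : 0 < N := Nat.succ_pos _
  have hhalf : ∀ k, ‖z (k + N)‖ ≤ (1 / 2) * ‖z k‖ := by
    intro k
    have h1 : ‖(f ^ N) (⟨z k, hmem k⟩ : V)‖ ≤ (∑ j, c j * ‖(f ^ N) (b j)‖) * ‖(⟨z k, hmem k⟩ : V)‖ :=
      hub N _
    have h2 : (((f ^ N) (⟨z k, hmem k⟩ : V) : V) : Fin n → ℝ) = z (k + N) := by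
      rw [hcoe N _]; exact hAk N k
    have h3 : ‖(f ^ N) (⟨z k, hmem k⟩ : V)‖ = ‖z (k + N)‖ := by
      rw [Submodule.coe_norm, h2]
    have h4 : ‖(⟨z k, hmem k⟩ : V)‖ = ‖z k‖ := by rw [Submodule.coe_norm]
    rw [h3, h4] at h1
    have h5 : (∑ j, c j * ‖(f ^ N) (b j)‖) < 1 / 2 := hN₀ N (by omega)
    calc ‖z (k + N)‖ ≤ (∑ j, c j * ‖(f ^ N) (b j)‖) * ‖z k‖ := h1
      _ ≤ (1 / 2) * ‖z k‖ := mul_le_mul_of_nonneg_right h5.le (norm_nonneg _)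
  -- geometric bound
  set C0 : ℝ := ∑ i ∈ Finset.range N, ‖z i‖ with hC0
  have hC0nn : 0 ≤ C0 := Finset.sum_nonneg fun _ _ => norm_nonneg _
  have hC0ge : ∀ i < N, ‖z i‖ ≤ C0 :=
    fun i hi => Finset.single_le_sum (fun _ _ => norm_nonneg _) (Finset.mem_range.2 hi)
  set ρ : ℝ := (1 / 2 : ℝ) ^ ((N : ℝ)⁻¹) with hρ
  have hρpos : 0 < ρ := Real.rpow_pos_of_pos (by norm_num) _
  have hρlt : ρ < 1 := Real.rpow_lt_one (by norm_num) (by norm_num)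
    (by positivity)
  have hρN : ρ ^ N = 1 / 2 := by
    rw [hρ, ← Real.rpow_natCast ((1 / 2 : ℝ) ^ ((N : ℝ)⁻¹)) N, ← Real.rpow_mul (by norm_num),
      inv_mul_cancel₀ (by exact_mod_cast hNpos.ne'), Real.rpow_one]
  refine ⟨2 * C0, ρ, by linarith, hρpos.le, hρlt, ?_⟩
  intro i
  induction i using Nat.strong_induction_on with
  | _ i ih =>
    by_cases hi : i < N
    · have h1 : ‖z i‖ ≤ C0 := hC0ge i hi
      have h2 : ρ ^ N ≤ ρ ^ i := pow_le_pow_of_le_one hρpos.le hρlt.le hi.le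
      rw [hρN] at h2
      nlinarith
    · push_neg at hi
      have hlt : i - N < i := by omega
      have heq : i - N + N = i := by omega
      have h1 : ‖z i‖ ≤ (1 / 2) * ‖z (i - N)‖ := by
        calc ‖z i‖ = ‖z (i - N + N)‖ := by rw [heq]
          _ ≤ (1 / 2) * ‖z (i - N)‖ := hhalf (i - N)
      have h2 : ‖z (i - N)‖ ≤ 2 * C0 * ρ ^ (i - N) := ih _ hlt
      have h3 : ρ ^ i = ρ ^ (i - N) * (1 / 2) := by
        rw [← hρN, ← pow_add, heq]
      rw [h3]
      nlinarith [pow_nonneg hρpos.le (i - N)]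

/-- The terminal cost given by the discrete Lyapunov equation equals the
infinite-horizon cost under the terminal feedback: if
`Q̄ − A_clᵀ Q̄ A_cl = Q + Kᵀ R K` and `z(i) = A_cl^i z₀ → 0`, then
`∑_{i=0}^{∞} (z(i)ᵀ Q z(i) + v(i)ᵀ R v(i)) = z₀ᵀ Q̄ z₀` with `v(i) = K z(i)`. -/
theorem terminal_cost_infinite_horizon
    {n m : ℕ}
    (Acl : Matrix (Fin n) (Fin n) ℝ) (K : Matrix (Fin m) (Fin n) ℝ)
    (Q Qbar : Matrix (Fin n) (Fin n) ℝ) (R : Matrix (Fin m) (Fin m) ℝ)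
    (hQ : Q.IsSymm) (hR : R.IsSymm) (hQbar : Qbar.IsSymm)
    (hLyap : Qbar - Aclᵀ * Qbar * Acl = Q + Kᵀ * R * K)
    (z₀ : Fin n → ℝ)
    (z : ℕ → (Fin n → ℝ)) (v : ℕ → (Fin m → ℝ))
    (hz : ∀ i, z i = (Acl ^ i) *ᵥ z₀)
    (hv : ∀ i, v i = K *ᵥ z i)
    (hconv : Tendsto z atTop (nhds 0)) :
    HasSum (fun i => z i ⬝ᵥ (Q *ᵥ z i) + v i ⬝ᵥ (R *ᵥ v i)) (z₀ ⬝ᵥ (Qbar *ᵥ z₀)) := by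
  have hstep : ∀ k, z (k + 1) = Acl *ᵥ z k := by
    intro k
    rw [hz (k + 1), hz k, Matrix.mulVec_mulVec, ← pow_succ']
  set g : ℕ → ℝ := fun i => z i ⬝ᵥ (Q *ᵥ z i) + v i ⬝ᵥ (R *ᵥ v i) with hg
  set ϕ : ℕ → ℝ := fun i => z i ⬝ᵥ (Qbar *ᵥ z i) with hϕ
  -- telescoping identity
  have htel : ∀ i, g i = ϕ i - ϕ (i + 1) := by
    intro i
    have key := congrArg (fun M : Matrix (Fin n) (Fin n) ℝ => z i ⬝ᵥ (M *ᵥ z i)) hLyap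
    simp only [Matrix.sub_mulVec, Matrix.add_mulVec, dotProduct_sub,
      dotProduct_add] at key
    have e1 : z i ⬝ᵥ ((Aclᵀ * Qbar * Acl) *ᵥ z i) = z (i + 1) ⬝ᵥ (Qbar *ᵥ z (i + 1)) := by
      rw [Matrix.mul_assoc, ← Matrix.mulVec_mulVec, Matrix.dotProduct_mulVec,
        Matrix.vecMul_transpose, ← Matrix.mulVec_mulVec, ← hstep i]
    have e2 : z i ⬝ᵥ ((Kᵀ * R * K) *ᵥ z i) = v i ⬝ᵥ (R *ᵥ v i) := by
      rw [Matrix.mul_assoc, ← Matrix.mulVec_mulVec, Matrix.dotProduct_mulVec,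
        Matrix.vecMul_transpose, ← Matrix.mulVec_mulVec, ← hv i]
    rw [e1, e2] at key
    simp only [hg, hϕ]
    linarith
  have hpsum : ∀ N : ℕ, ∑ i ∈ Finset.range N, g i = ϕ 0 - ϕ N := by
    intro N
    calc ∑ i ∈ Finset.range N, g i = ∑ i ∈ Finset.range N, (ϕ i - ϕ (i + 1)) :=
          Finset.sum_congr rfl fun i _ => htel i
      _ = ϕ 0 - ϕ N := Finset.sum_range_sub' ϕ N
  have hz0 : z 0 = z₀ := by rw [hz 0, pow_zero, Matrix.one_mulVec]
  have hΦcont : Continuous fun x : Fin n → ℝ => x ⬝ᵥ (Qbar *ᵥ x) := by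
    simp only [dotProduct, Matrix.mulVec]
    refine continuous_finset_sum _ fun j _ => ?_
    exact (continuous_apply j).mul
      (continuous_finset_sum _ fun k _ => continuous_const.mul (continuous_apply k))
  have hϕ0 : Tendsto ϕ atTop (nhds 0) := by
    have h := (hΦcont.tendsto 0).comp hconv
    rw [hϕ]; simpa [Function.comp_def] using h
  have htends : Tendsto (fun N => ∑ i ∈ Finset.range N, g i) atTop
      (nhds (z₀ ⬝ᵥ (Qbar *ᵥ z₀))) := by
    simp only [hpsum]
    have h := (tendsto_const_nhds (x := ϕ 0)).sub hϕ0
    rw [sub_zero] at h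
    have h0 : ϕ 0 = z₀ ⬝ᵥ (Qbar *ᵥ z₀) := by rw [hϕ]; simp only; rw [hz0]
    rw [← h0]
    exact h
  -- summability
  obtain ⟨C, ρ, hC0, hρ0, hρ1, hdec⟩ := aux_decay Acl z hstep hconv
  obtain ⟨cQ, hcQ0, hcQ⟩ := aux_quad Q
  obtain ⟨cR, hcR0, hcR⟩ := aux_quad R
  obtain ⟨cK, hcK0, hcK⟩ := aux_mulVec K
  have hsummable : Summable g := by
    refine Summable.of_norm_bounded
      (g := fun i => ((cQ + cR * cK ^ 2) * C ^ 2) * (ρ ^ 2) ^ i)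
      (Summable.mul_left _ (summable_geometric_of_lt_one (by positivity) (by nlinarith))) ?_
    intro i
    have b1 := hcQ (z i)
    have b2 := hcR (v i)
    have b3 : ‖v i‖ ≤ cK * ‖z i‖ := by rw [hv i]; exact hcK (z i)
    have hzn : (0 : ℝ) ≤ ‖z i‖ := norm_nonneg _
    have hvn : (0 : ℝ) ≤ ‖v i‖ := norm_nonneg _
    have hzi := hdec i
    have hρi : (0 : ℝ) ≤ ρ ^ i := by positivity
    have habs : ‖g i‖ ≤ cQ * (‖z i‖ * ‖z i‖) + cR * (‖v i‖ * ‖v i‖) := by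
      rw [hg, Real.norm_eq_abs]
      calc |z i ⬝ᵥ (Q *ᵥ z i) + v i ⬝ᵥ (R *ᵥ v i)| ≤
            |z i ⬝ᵥ (Q *ᵥ z i)| + |v i ⬝ᵥ (R *ᵥ v i)| := abs_add_le _ _
        _ ≤ cQ * (‖z i‖ * ‖z i‖) + cR * (‖v i‖ * ‖v i‖) := add_le_add b1 b2
    have hsq : ‖z i‖ * ‖z i‖ ≤ C ^ 2 * (ρ ^ 2) ^ i := by
      have := mul_le_mul hzi hzi hzn (by positivity)
      calc ‖z i‖ * ‖z i‖ ≤ (C * ρ ^ i) * (C * ρ ^ i) := this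
        _ = C ^ 2 * (ρ ^ 2) ^ i := by ring
    have hvsq : ‖v i‖ * ‖v i‖ ≤ cK ^ 2 * (‖z i‖ * ‖z i‖) := by
      have := mul_le_mul b3 b3 hvn (by positivity)
      calc ‖v i‖ * ‖v i‖ ≤ (cK * ‖z i‖) * (cK * ‖z i‖) := this
        _ = cK ^ 2 * (‖z i‖ * ‖z i‖) := by ring
    calc ‖g i‖ ≤ cQ * (‖z i‖ * ‖z i‖) + cR * (‖v i‖ * ‖v i‖) := habs
      _ ≤ cQ * (‖z i‖ * ‖z i‖) + cR * (cK ^ 2 * (‖z i‖ * ‖z i‖)) := by nlinarith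
      _ = (cQ + cR * cK ^ 2) * (‖z i‖ * ‖z i‖) := by ring
      _ ≤ (cQ + cR * cK ^ 2) * (C ^ 2 * (ρ ^ 2) ^ i) := by
          refine mul_le_mul_of_nonneg_left hsq (by positivity)
      _ = ((cQ + cR * cK ^ 2) * C ^ 2) * (ρ ^ 2) ^ i := by ring
  exact (hsummable.hasSum_iff_tendsto_nat).2 htends
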